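/- Let S be a Young tableau of shape μ with entry set A₀ and a ∉ A₀. Let b₁, …, b_k (k ≥ 2) be entries of S in strictly increasing distinct columns, with b₁ and b₂ in the same row of S. Let σ = (a, b_k, …, b₂, b₁) and τ = (a, b_k, …, b₂). Then c_μ(S) · σ · c_μ(S) = c_μ(S) · τ · c_μ(S). -/

import Mathlib

open scoped Classical

/-- The row symmetrizer `a_μ(T) = ∑_{σ ∈ R_T} σ` of a Young tableau `T : D_μ → A`:
the sum of all permutations of `A` which fix every element outside the image of `T`
and map the entries of each row of `T` to entries of the same row. -/
noncomputable def aRow (K : Type*) [Field K] {A : Type*} [Fintype A] [DecidableEq A]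
    (μ : YoungDiagram) (T : μ.cells → A) : MonoidAlgebra K (Equiv.Perm A) :=
  ∑ σ ∈ Finset.univ.filter (fun σ : Equiv.Perm A =>
      (∀ x : A, (∀ c : μ.cells, T c ≠ x) → σ x = x) ∧
      ∀ c : μ.cells, ∃ c' : μ.cells, (c' : ℕ × ℕ).1 = (c : ℕ × ℕ).1 ∧ σ (T c) = T c'),
    MonoidAlgebra.single σ 1

/-- The column antisymmetrizer `b_μ(T) = ∑_{τ ∈ C_T} sgn(τ)·τ` of a Young tableau. -/
noncomputable def bCol (K : Type*) [Field K] {A : Type*} [Fintype A] [DecidableEq A]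
    (μ : YoungDiagram) (T : μ.cells → A) : MonoidAlgebra K (Equiv.Perm A) :=
  ∑ τ ∈ Finset.univ.filter (fun τ : Equiv.Perm A =>
      (∀ x : A, (∀ c : μ.cells, T c ≠ x) → τ x = x) ∧
      ∀ c : μ.cells, ∃ c' : μ.cells, (c' : ℕ × ℕ).2 = (c : ℕ × ℕ).2 ∧ τ (T c) = T c'),
    MonoidAlgebra.single τ ((Equiv.Perm.sign τ : ℤ) : K)

/-- The Young symmetrizer `c_μ(T) = a_μ(T) · b_μ(T)`. -/
noncomputable def youngSymm (K : Type*) [Field K] {A : Type*} [Fintype A] [DecidableEq A]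
    (μ : YoungDiagram) (T : μ.cells → A) : MonoidAlgebra K (Equiv.Perm A) :=
  aRow K μ T * bCol K μ T

/-- The set of entries in column `j` of the tableau `T`. -/
noncomputable def colSet {A : Type*} [Fintype A] [DecidableEq A]
    (μ : YoungDiagram) (T : μ.cells → A) (j : ℕ) : Finset A :=
  Finset.univ.filter (fun x : A => ∃ c : μ.cells, (c : ℕ × ℕ).2 = j ∧ T c = x)

/-- `z_j = ∑_{b ∈ C_j(S)} (a,b)` in the group algebra. -/
noncomputable def zCol (K : Type*) [Field K] {A : Type*} [Fintype A] [DecidableEq A]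
    (μ : YoungDiagram) (T : μ.cells → A) (a : A) (j : ℕ) :
    MonoidAlgebra K (Equiv.Perm A) :=
  ∑ b ∈ colSet μ T j, MonoidAlgebra.single (Equiv.swap a b) (1 : K)

/-- `α_μ`: the product of all hook lengths of the Young diagram `μ`. -/
def hookProd (μ : YoungDiagram) : ℕ :=
  ∏ c ∈ μ.cells, (μ.rowLen c.1 - c.2 + (μ.colLen c.2 - c.1) - 1)

section Aux

set_option linter.unusedSectionVars false

variable {A : Type*} [Fintype A] [DecidableEq A] {μ : YoungDiagram} {S : μ.cells → A}

/-- Membership predicate for the row group `R_S`. -/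
def RowP (μ : YoungDiagram) (S : μ.cells → A) (σ : Equiv.Perm A) : Prop :=
  (∀ x : A, (∀ c : μ.cells, S c ≠ x) → σ x = x) ∧
  ∀ c : μ.cells, ∃ c' : μ.cells, (c' : ℕ × ℕ).1 = (c : ℕ × ℕ).1 ∧ σ (S c) = S c'

theorem RowP.mul {σ τ : Equiv.Perm A} (hσ : RowP μ S σ) (hτ : RowP μ S τ) :
    RowP μ S (σ * τ) := by
  constructor
  · intro x hx
    simp [Equiv.Perm.mul_apply, hτ.1 x hx, hσ.1 x hx]
  · intro c
    obtain ⟨c', hc'1, hc'2⟩ := hτ.2 c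
    obtain ⟨c'', hc''1, hc''2⟩ := hσ.2 c'
    exact ⟨c'', by rw [hc''1, hc'1], by simp [Equiv.Perm.mul_apply, hc'2, hc''2]⟩

theorem RowP.inv (hS : Function.Injective S) {σ : Equiv.Perm A} (hσ : RowP μ S σ) :
    RowP μ S σ⁻¹ := by
  constructor
  · intro x hx
    conv_lhs => rw [← hσ.1 x hx]
    simp
  · choose g hg1 hg2 using hσ.2
    have hinj : Function.Injective g := by
      intro c₁ c₂ h
      apply hS
      apply σ.injective
      rw [hg2 c₁, hg2 c₂, h]
    have hsurj : Function.Surjective g := Finite.surjective_of_injective hinj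
    intro c
    obtain ⟨c₀, rfl⟩ := hsurj c
    refine ⟨c₀, (hg1 c₀).symm, ?_⟩
    rw [← hg2 c₀, Equiv.Perm.coe_inv, Equiv.symm_apply_apply]

theorem swap_rowP (hS : Function.Injective S) {c₀ c₁ : μ.cells}
    (h : (c₀ : ℕ × ℕ).1 = (c₁ : ℕ × ℕ).1) :
    RowP μ S (Equiv.swap (S c₀) (S c₁)) := by
  constructor
  · intro x hx
    exact Equiv.swap_apply_of_ne_of_ne (Ne.symm (hx c₀)) (Ne.symm (hx c₁))
  · intro c
    by_cases h0 : c = c₀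
    · subst h0
      exact ⟨c₁, h.symm, by simp⟩
    by_cases h1 : c = c₁
    · subst h1
      exact ⟨c₀, h, by simp⟩
    · exact ⟨c, rfl, Equiv.swap_apply_of_ne_of_ne
        (fun hh => h0 (hS hh)) (fun hh => h1 (hS hh))⟩

theorem single_mul_aRow (K : Type*) [Field K] (hS : Function.Injective S)
    {r : Equiv.Perm A} (hr : RowP μ S r) :
    MonoidAlgebra.single r (1 : K) * aRow K μ S = aRow K μ S := by
  rw [aRow, Finset.mul_sum]
  simp only [MonoidAlgebra.single_mul_single, one_mul]
  refine Finset.sum_nbij' (fun σ => r * σ) (fun σ => r⁻¹ * σ) ?_ ?_ ?_ ?_ ?_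
  · intro σ hσ
    rw [Finset.mem_filter] at hσ ⊢
    exact ⟨Finset.mem_univ _, hr.mul hσ.2⟩
  · intro σ hσ
    rw [Finset.mem_filter] at hσ ⊢
    exact ⟨Finset.mem_univ _, (hr.inv hS).mul hσ.2⟩
  · intro σ _; group
  · intro σ _; group
  · intro σ _; rfl

end Aux

section Cyc

variable {A : Type*} [DecidableEq A]

theorem swap_commute_of_ne {x y z w : A}
    (hxz : x ≠ z) (hxw : x ≠ w) (hyz : y ≠ z) (hyw : y ≠ w) :
    Commute (Equiv.swap x y) (Equiv.swap z w) := by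
  unfold Commute SemiconjBy
  ext u
  simp only [Equiv.Perm.mul_apply, Equiv.swap_apply_def]
  split_ifs <;> simp_all

theorem swap_swap_eq {x y z : A} (hxy : x ≠ y) (hxz : x ≠ z) (hyz : y ≠ z) :
    Equiv.swap x y * Equiv.swap x z = Equiv.swap x z * Equiv.swap y z := by
  ext u
  simp only [Equiv.Perm.mul_apply, Equiv.swap_apply_def]
  split_ifs <;> simp_all

theorem cycle_drop (a : A) {n : ℕ} (b : Fin (n + 2) → A)
    (hinj : Function.Injective b) (hba : ∀ t, b t ≠ a) :
    (List.ofFn fun t => Equiv.swap a (b t)).prod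
      = (List.ofFn fun t : Fin (n + 1) => Equiv.swap a (b t.succ)).prod
        * Equiv.swap (b 0) (b 1) := by
  rw [List.ofFn_succ, List.prod_cons]
  rw [List.ofFn_succ (f := fun t : Fin (n + 1) => Equiv.swap a (b t.succ)), List.prod_cons]
  have h01 : Fin.succ (0 : Fin (n + 1)) = (1 : Fin (n + 2)) := rfl
  rw [h01]
  set ρ : Equiv.Perm A :=
    (List.ofFn fun i : Fin n => Equiv.swap a (b i.succ.succ)).prod with hρ
  have hb01 : b 0 ≠ b 1 := fun h => absurd (hinj h) (by simp [Fin.ext_iff])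
  have hcomm : Commute (Equiv.swap (b 0) (b 1)) ρ := by
    apply Commute.list_prod_right
    intro x hx
    rw [List.mem_ofFn] at hx
    obtain ⟨i, rfl⟩ := hx
    refine swap_commute_of_ne ?_ ?_ ?_ ?_
    · exact hba 0
    · exact fun h => absurd (hinj h) (by simp [Fin.ext_iff])
    · exact hba 1
    · exact fun h => absurd (hinj h) (by simp [Fin.ext_iff])
  have h1 : Equiv.swap a (b 0) * Equiv.swap a (b 1)
      = Equiv.swap a (b 1) * Equiv.swap (b 0) (b 1) :=
    swap_swap_eq (Ne.symm (hba 0)) (Ne.symm (hba 1)) hb01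
  calc Equiv.swap a (b 0) * (Equiv.swap a (b 1) * ρ)
      = (Equiv.swap a (b 0) * Equiv.swap a (b 1)) * ρ := by rw [mul_assoc]
    _ = (Equiv.swap a (b 1) * Equiv.swap (b 0) (b 1)) * ρ := by rw [h1]
    _ = Equiv.swap a (b 1) * (Equiv.swap (b 0) (b 1) * ρ) := by rw [mul_assoc]
    _ = Equiv.swap a (b 1) * (ρ * Equiv.swap (b 0) (b 1)) := by rw [hcomm.eq]
    _ = Equiv.swap a (b 1) * ρ * Equiv.swap (b 0) (b 1) := by rw [mul_assoc]

end Cyc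

set_option maxHeartbeats 1600000 in
/-- for entries `b₁, …, b_k` of `S` in strictly increasing distinct
columns with `b₁, b₂` in the same row, `σ = (a,b₁)(a,b₂)⋯(a,b_k)` and
`τ = (a,b₂)(a,b₃)⋯(a,b_k)`, one has `c_μ(S)·σ·c_μ(S) = c_μ(S)·τ·c_μ(S)`. -/
theorem youngSymm_cycle_drop (K : Type*) [Field K] [CharZero K] {A : Type*} [Fintype A]
    [DecidableEq A] (μ : YoungDiagram) (S : μ.cells → A) (hS : Function.Injective S)
    (a : A) (ha : ∀ c : μ.cells, S c ≠ a)
    (k : ℕ) (hk : 2 ≤ k) (c : Fin k → μ.cells)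
    (hcols : StrictMono fun t => (c t : ℕ × ℕ).2)
    (hrows : (c ⟨0, by omega⟩ : ℕ × ℕ).1 = (c ⟨1, by omega⟩ : ℕ × ℕ).1) :
    youngSymm K μ S *
        MonoidAlgebra.single ((List.ofFn fun t => Equiv.swap a (S (c t))).prod) (1 : K) *
        youngSymm K μ S
      = youngSymm K μ S *
          MonoidAlgebra.single
            ((List.ofFn fun t : Fin (k - 1) =>
              Equiv.swap a (S (c ⟨(t : ℕ) + 1, by have := t.isLt; omega⟩))).prod) (1 : K) *
          youngSymm K μ S := by
  obtain ⟨m, rfl⟩ : ∃ m, k = m + 2 := ⟨k - 2, by omega⟩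
  have hcinj : Function.Injective c := fun t t' h => hcols.injective (by rw [h])
  have hbinj : Function.Injective (fun t => S (c t)) := hS.comp hcinj
  have hba : ∀ t, S (c t) ≠ a := fun t => ha (c t)
  have key := cycle_drop a (fun t => S (c t)) hbinj hba
  have hτ : (List.ofFn fun t : Fin (m + 1) => Equiv.swap a (S (c t.succ))).prod
      = (List.ofFn fun t : Fin (m + 2 - 1) =>
          Equiv.swap a (S (c ⟨(t : ℕ) + 1, by have := t.isLt; omega⟩))).prod := rfl
  have hrows' : (c 0 : ℕ × ℕ).1 = (c 1 : ℕ × ℕ).1 := by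
    have e0 : (0 : Fin (m + 2)) = ⟨0, by omega⟩ := by ext; simp
    have e1 : (1 : Fin (m + 2)) = ⟨1, by omega⟩ := by ext; simp
    rw [e0, e1]; exact hrows
  rw [key, hτ]
  have hsplit : MonoidAlgebra.single ((List.ofFn fun t : Fin (m + 2 - 1) =>
          Equiv.swap a (S (c ⟨(t : ℕ) + 1, by have := t.isLt; omega⟩))).prod
        * Equiv.swap (S (c 0)) (S (c 1))) (1 : K)
      = MonoidAlgebra.single ((List.ofFn fun t : Fin (m + 2 - 1) =>
          Equiv.swap a (S (c ⟨(t : ℕ) + 1, by have := t.isLt; omega⟩))).prod) (1 : K)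
        * MonoidAlgebra.single (Equiv.swap (S (c 0)) (S (c 1))) (1 : K) := by
    rw [MonoidAlgebra.single_mul_single, one_mul]
  rw [hsplit]
  have hr : RowP μ S (Equiv.swap (S (c 0)) (S (c 1))) := swap_rowP hS hrows'
  have habs : MonoidAlgebra.single
      (Equiv.swap (S (c 0)) (S (c 1))) (1 : K) * youngSymm K μ S
      = youngSymm K μ S := by
    rw [youngSymm, ← mul_assoc, single_mul_aRow K hS hr]
  rw [mul_assoc, mul_assoc, habs, ← mul_assoc]
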